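/- For a Hom-Novikov superalgebra (A, *, α), the coboundary operators satisfy δ²_hom ∘ δ¹_hom = 0: for every even 1-Hom-cochain f (linear map with fα = αf), δ²_hom(δ¹_hom f) = 0. -/
import Mathlib


/-- The first coboundary `δ¹ f` of an even linear map `f` commuting with `α`:
`δ¹f(x,y) = x*f(y) + f(x)*y - f(x*y)`. -/
def d1 {𝕜 A : Type*} [Field 𝕜] [AddCommGroup A] [Module 𝕜 A]
    (mul : A →ₗ[𝕜] A →ₗ[𝕜] A) (f : A →ₗ[𝕜] A) (x y : A) : A :=
  mul x (f y) + mul (f x) y - f (mul x y)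

theorem stmt13
    (𝕜 A : Type*) [Field 𝕜] [AddCommGroup A] [Module 𝕜 A]
    (G : ZMod 2 → Submodule 𝕜 A) (hG : DirectSum.IsInternal G)
    (mul : A →ₗ[𝕜] A →ₗ[𝕜] A) (α : A →ₗ[𝕜] A)
    (hmul_even : ∀ i j : ZMod 2, ∀ x ∈ G i, ∀ y ∈ G j, mul x y ∈ G (i + j))
    (hα_even : ∀ i : ZMod 2, ∀ x ∈ G i, α x ∈ G i)
    (hα_mul : ∀ x y : A, α (mul x y) = mul (α x) (α y))
    (hls : ∀ i j k : ZMod 2, ∀ x ∈ G i, ∀ y ∈ G j, ∀ z ∈ G k,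
      mul (mul x y) (α z) - mul (α x) (mul y z)
        = ((-1 : 𝕜) ^ (i.val * j.val)) • (mul (mul y x) (α z) - mul (α y) (mul x z)))
    (hrn : ∀ i j k : ZMod 2, ∀ x ∈ G i, ∀ y ∈ G j, ∀ z ∈ G k,
      mul (mul x y) (α z) = ((-1 : 𝕜) ^ (j.val * k.val)) • mul (mul x z) (α y))
    (f : A →ₗ[𝕜] A)
    (hf_even : ∀ i : ZMod 2, ∀ x ∈ G i, f x ∈ G i)
    (hfα : ∀ x : A, f (α x) = α (f x)) :
    ∀ i j k : ZMod 2, ∀ x ∈ G i, ∀ y ∈ G j, ∀ z ∈ G k,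
      d1 mul f (α x) (mul y z)
        - ((-1 : 𝕜) ^ (i.val * j.val)) • d1 mul f (α y) (mul x z)
        + ((-1 : 𝕜) ^ (i.val * j.val)) • d1 mul f (mul y x) (α z)
        + mul (α x) (d1 mul f y z)
        - ((-1 : 𝕜) ^ (i.val * j.val)) • mul (α y) (d1 mul f x z)
        + ((-1 : 𝕜) ^ (i.val * j.val)) • mul (d1 mul f y x) (α z)
        - ((-1 : 𝕜) ^ (j.val * k.val)) • d1 mul f (mul x z) (α y)
        - ((-1 : 𝕜) ^ (j.val * k.val)) • mul (d1 mul f x z) (α y) = 0 := by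
  intro i j k x hx y hy z hz
  have hfx := hf_even i x hx
  have hfy := hf_even j y hy
  have hfz := hf_even k z hz
  have E1 : mul (mul y x) (α z) - mul (α y) (mul x z)
      = ((-1 : 𝕜) ^ (i.val * j.val)) • (mul (mul x y) (α z) - mul (α x) (mul y z)) := by
    have := hls j i k y hy x hx z hz
    rwa [Nat.mul_comm j.val i.val] at this
  have E1f : f (mul (mul y x) (α z)) - f (mul (α y) (mul x z))
      = ((-1 : 𝕜) ^ (i.val * j.val)) •
        (f (mul (mul x y) (α z)) - f (mul (α x) (mul y z))) := by
    have := congrArg f E1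
    simpa [map_sub, map_smul] using this
  have E2f : f (mul (mul x y) (α z))
      = ((-1 : 𝕜) ^ (j.val * k.val)) • f (mul (mul x z) (α y)) := by
    have := congrArg f (hrn i j k x hx y hy z hz)
    simpa [map_smul] using this
  have E3 := hls i j k (f x) hfx y hy z hz
  have E4 := hrn i j k (f x) hfx y hy z hz
  have E5 := hls i j k x hx (f y) hfy z hz
  have E6 := hrn i j k x hx (f y) hfy z hz
  have E7 := hls i j k x hx y hy (f z) hfz
  have E8 := hrn i j k x hx y hy (f z) hfz
  simp only [d1, map_add, map_sub, map_smul, LinearMap.add_apply, LinearMap.sub_apply,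
    LinearMap.smul_apply, hfα]
  rcases Nat.even_or_odd (i.val * j.val) with he | he
  · rw [he.neg_one_pow] at E1f E3 E5 E7 ⊢
    linear_combination (norm := module)
      (-1 : 𝕜) • E1f - E2f - E3 + E4 - E5 + E6 - E7 + E8
  · rw [he.neg_one_pow] at E1f E3 E5 E7 ⊢
    linear_combination (norm := module)
      (1 : 𝕜) • E1f - E2f - E3 + E4 - E5 + E6 - E7 + E8
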